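/- arXiv:1604.00124 — 5 statements merged into one kernel-verified Lean document; each statement's English description precedes it below -/
import Mathlib

section
/- Let r, s, c₁, c₂, c₃ be real numbers and let ρ be the 4×4 matrix (1/4)·[[1+r+s+c₃, 0, 0, c₁−c₂], [0, 1+r−s−c₃, c₁+c₂, 0], [0, c₁+c₂, 1−r+s−c₃, 0], [c₁−c₂, 0, 0, 1−r−s+c₃]], viewed as a complex Hermitian matrix. Then ρ is positive semidefinite if and only if 1−c₃ ≥ √((r−s)²+(c₁+c₂)²) and 1+c₃ ≥ √((r+s)²+(c₁−c₂)²). -/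
/-!
Reordering the basis as `|01⟩, |10⟩, |00⟩, |11⟩` makes `ρ` block diagonal, with two real
symmetric `2 × 2` blocks of the form `[[m + p, c], [c, m - p]]` (up to the factor `1/4`).
Such a block is positive semidefinite iff its diagonal entries and its determinant
`m² - p² - c²` are nonnegative, i.e. iff `√(p² + c²) ≤ m`.
-/

open scoped ComplexOrder
open Matrix

theorem Real.sqrt_sq_add_sq_le_iff (m p c : ℝ) :
    √(p ^ 2 + c ^ 2) ≤ m ↔ 0 ≤ m + p ∧ 0 ≤ m - p ∧ c ^ 2 ≤ (m + p) * (m - p) := by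
  rw [Real.sqrt_le_iff]
  constructor
  · rintro ⟨hm, h⟩
    obtain ⟨h₁, h₂⟩ := abs_le_of_sq_le_sq' (show p ^ 2 ≤ m ^ 2 by nlinarith [sq_nonneg c]) hm
    exact ⟨by linarith, by linarith, by nlinarith⟩
  · rintro ⟨h₁, h₂, h⟩
    exact ⟨by linarith, by nlinarith⟩

theorem mul_sq_add_mul_sq_add_two_mul_mul_nonneg {a c d x y w : ℝ} (ha : 0 ≤ a) (hd : 0 ≤ d)
    (hc : c ^ 2 ≤ a * d) (hw : |w| ≤ x * y) : 0 ≤ a * x ^ 2 + d * y ^ 2 + 2 * c * w := by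
  have hw2 : w ^ 2 ≤ (x * y) ^ 2 := sq_abs w ▸ pow_le_pow_left₀ (abs_nonneg w) hw 2
  have hcw : c ^ 2 * w ^ 2 ≤ a * d * (x * y) ^ 2 :=
    mul_le_mul hc hw2 (sq_nonneg w) (mul_nonneg ha hd)
  have hsq : (2 * c * w) ^ 2 ≤ (a * x ^ 2 + d * y ^ 2) ^ 2 := by
    nlinarith [sq_nonneg (a * x ^ 2 - d * y ^ 2)]
  have hpos : 0 ≤ a * x ^ 2 + d * y ^ 2 := by positivity
  linarith [(abs_le_of_sq_le_sq' hsq hpos).1]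

namespace Matrix

theorem posSemidef_smul_iff {𝕜 n : Type*} [RCLike 𝕜] [Fintype n] {M : Matrix n n 𝕜} {k : 𝕜}
    (hk : 0 < k) : (k • M).PosSemidef ↔ M.PosSemidef :=
  ⟨fun h => by simpa [smul_smul, hk.ne'] using h.smul (inv_pos.2 hk).le, fun h => h.smul hk.le⟩

theorem posSemidef_fromBlocks_zero_iff {m n R : Type*} [Fintype m] [Fintype n] [Ring R]
    [PartialOrder R] [StarRing R] [AddLeftMono R] {A : Matrix m m R} {D : Matrix n n R} :
    (fromBlocks A 0 0 D).PosSemidef ↔ A.PosSemidef ∧ D.PosSemidef := by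
  refine ⟨fun h => ⟨h.submatrix Sum.inl, h.submatrix Sum.inr⟩, fun ⟨hA, hD⟩ => ?_⟩
  refine .of_dotProduct_mulVec_nonneg (hA.isHermitian.fromBlocks (by simp) hD.isHermitian)
    fun x => ?_
  convert add_nonneg (hA.dotProduct_mulVec_nonneg (x ∘ Sum.inl))
    (hD.dotProduct_mulVec_nonneg (x ∘ Sum.inr)) using 1
  rw [← Sum.elim_comp_inl_inr x, fromBlocks_mulVec]
  simp [dotProduct, Fintype.sum_sum_type]

theorem posSemidef_fin_two_ofReal_iff (a c d : ℝ) :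
    (!![(a : ℂ), c; c, d]).PosSemidef ↔ 0 ≤ a ∧ 0 ≤ d ∧ c ^ 2 ≤ a * d := by
  constructor
  · intro h
    have h₀ := h.diag_nonneg (i := 0)
    have h₁ := h.diag_nonneg (i := 1)
    have hdet := h.det_nonneg
    simp only [of_apply, cons_val', cons_val_zero, cons_val_one, empty_val', cons_val_fin_one,
      det_fin_two_of] at h₀ h₁ hdet
    norm_cast at h₀ h₁ hdet
    exact ⟨h₀, h₁, by nlinarith⟩
  · rintro ⟨ha, hd, hc⟩
    have hM : (!![(a : ℂ), c; c, d]).IsHermitian := by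
      ext i j; fin_cases i <;> fin_cases j <;> simp
    refine .of_dotProduct_mulVec_nonneg hM fun x => ?_
    have hform : star x ⬝ᵥ (!![(a : ℂ), c; c, d] *ᵥ x) =
        ((a * ‖x 0‖ ^ 2 + d * ‖x 1‖ ^ 2 + 2 * c * (star (x 0) * x 1).re : ℝ) : ℂ) := by
      apply Complex.ext <;>
        simp [dotProduct, Fin.sum_univ_two, ← Complex.normSq_eq_norm_sq, Complex.normSq] <;> ring
    rw [hform, Complex.zero_le_real]
    refine mul_sq_add_mul_sq_add_two_mul_mul_nonneg ha hd hc ?_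
    simpa using Complex.abs_re_le_norm (star (x 0) * x 1)

end Matrix

def xBlockEquiv : Fin 2 ⊕ Fin 2 ≃ Fin 4 where
  toFun := Sum.elim ![1, 2] ![0, 3]
  invFun := ![.inr 0, .inl 0, .inl 1, .inr 1]
  left_inv := by decide
  right_inv := by decide

theorem submatrix_xBlockEquiv {α : Type*} [Zero α] (a b c d e f g h : α) :
    (!![a, 0, 0, b; 0, c, d, 0; 0, e, f, 0; g, 0, 0, h]).submatrix xBlockEquiv xBlockEquiv =
      fromBlocks !![c, d; e, f] 0 0 !![a, b; g, h] := by
  ext (i | i) (j | j) <;> fin_cases i <;> fin_cases j <;> rfl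

theorem xstate_posSemidef_iff (r s c₁ c₂ c₃ : ℝ)
    (ρ : Matrix (Fin 4) (Fin 4) ℂ)
    (hρ : ρ = (1/4 : ℂ) •
      !![((1+r+s+c₃ : ℝ) : ℂ), 0, 0, ((c₁-c₂ : ℝ) : ℂ);
         0, ((1+r-s-c₃ : ℝ) : ℂ), ((c₁+c₂ : ℝ) : ℂ), 0;
         0, ((c₁+c₂ : ℝ) : ℂ), ((1-r+s-c₃ : ℝ) : ℂ), 0;
         ((c₁-c₂ : ℝ) : ℂ), 0, 0, ((1-r-s+c₃ : ℝ) : ℂ)]) :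
    ρ.PosSemidef ↔
      (Real.sqrt ((r-s)^2 + (c₁+c₂)^2) ≤ 1 - c₃ ∧
       Real.sqrt ((r+s)^2 + (c₁-c₂)^2) ≤ 1 + c₃) := by
  rw [hρ, posSemidef_smul_iff (by norm_num), ← posSemidef_submatrix_equiv xBlockEquiv,
    submatrix_xBlockEquiv, posSemidef_fromBlocks_zero_iff, posSemidef_fin_two_ofReal_iff,
    posSemidef_fin_two_ofReal_iff, Real.sqrt_sq_add_sq_le_iff, Real.sqrt_sq_add_sq_le_iff]
  -- the diagonal entries of the blocks are `(1 ∓ c₃) ± (r ∓ s)`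
  ring_nf
end

section
/- Let r, s, c₁, c₂, c₃ be real numbers satisfying 1−c₃ ≥ √((r−s)²+(c₁+c₂)²) and 1+c₃ ≥ √((r+s)²+(c₁−c₂)²). Then for all real z₁, z₂, z₃ with z₁²+z₂²+z₃² = 1, both r² + 2rc₃z₃ + (c₁z₁)² + (c₂z₂)² + (c₃z₃)² ≤ (1+sz₃)² and r² − 2rc₃z₃ + (c₁z₁)² + (c₂z₂)² + (c₃z₃)² ≤ (1−sz₃)². In particular, r² + max(c₁², c₂²) ≤ 1. -/
/-!
Put `X = (1 + z₃) / 2` and `W = (1 - z₃) / 2`, so that `X + W = 1`, `X - W = z₃` and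
`4 X W = z₁² + z₂²`. The gap `(1 + s z₃)² - (r + c₃ z₃)²` then factors as `(α X + β W) (γ X + δ W)`,
where `α, δ = 1 + c₃ ± (r + s)` and `β, γ = 1 - c₃ ± (r - s)`. The X-state conditions say exactly
that these four numbers are nonnegative with `α δ ≥ (c₁ - c₂)²` and `β γ ≥ (c₁ + c₂)²`, so by
Cauchy–Schwarz the product is at least `(|c₁ - c₂| + |c₁ + c₂|)² X W = max (c₁², c₂²) (z₁² + z₂²)`,
which dominates `(c₁ z₁)² + (c₂ z₂)²`.
-/

section OrderedRing

variable {R : Type*} [CommRing R] [LinearOrder R] [IsStrictOrderedRing R]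

theorem sq_abs_sub_add_abs_add (a b : R) :
    (|a - b| + |a + b|) ^ 2 = 4 * max (a ^ 2) (b ^ 2) := by
  rw [add_sq, sq_abs, sq_abs, mul_assoc, ← abs_mul]
  rcases le_total (a ^ 2) (b ^ 2) with h | h
  · rw [max_eq_right h, abs_of_nonpos (by nlinarith)]
    ring
  · rw [max_eq_left h, abs_of_nonneg (by nlinarith)]
    ring

theorem sq_abs_add_abs_mul_le_mul {a b c d p q k : R} (ha : 0 ≤ a) (hb : 0 ≤ b) (hc : 0 ≤ c)
    (hd : 0 ≤ d) (hk : 0 ≤ k) (hp : p ^ 2 * k ≤ a * d) (hq : q ^ 2 * k ≤ b * c) :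
    (|p| + |q|) ^ 2 * k ≤ (a + b) * (c + d) := by
  have hcross : 2 * (|p * q| * k) ≤ a * c + b * d := by
    refine le_of_pow_le_pow_left₀ two_ne_zero (by positivity) ?_
    calc (2 * (|p * q| * k)) ^ 2 = 4 * ((p ^ 2 * k) * (q ^ 2 * k)) := by
          rw [mul_pow, mul_pow, sq_abs]; ring
      _ ≤ 4 * ((a * d) * (b * c)) := by gcongr
      _ ≤ (a * c + b * d) ^ 2 := by nlinarith [sq_nonneg (a * c - b * d)]
  calc (|p| + |q|) ^ 2 * k = p ^ 2 * k + q ^ 2 * k + 2 * (|p * q| * k) := by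
        rw [add_sq, sq_abs, sq_abs, abs_mul]; ring
    _ ≤ a * d + b * c + (a * c + b * d) := by gcongr
    _ = (a + b) * (c + d) := by ring

end OrderedRing

theorem sub_nonneg_and_add_nonneg_and_sq_le_of_sqrt_le {x p y : ℝ} (h : √(x ^ 2 + p ^ 2) ≤ y) :
    0 ≤ y - x ∧ 0 ≤ y + x ∧ p ^ 2 ≤ (y - x) * (y + x) := by
  obtain ⟨hy, hxy⟩ := Real.sqrt_le_iff.mp h
  have hx : x ^ 2 ≤ y ^ 2 := by nlinarith [sq_nonneg p]
  obtain ⟨hx₁, hx₂⟩ := abs_le_of_sq_le_sq' hx hy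
  exact ⟨by linarith, by linarith, by nlinarith⟩

theorem sq_add_sq_add_sq_le_of_sqrt_le {r s c₁ c₂ c₃ z₁ z₂ z₃ : ℝ}
    (h1 : √((r - s) ^ 2 + (c₁ + c₂) ^ 2) ≤ 1 - c₃)
    (h2 : √((r + s) ^ 2 + (c₁ - c₂) ^ 2) ≤ 1 + c₃) (hz : z₁ ^ 2 + z₂ ^ 2 + z₃ ^ 2 = 1) :
    (r + c₃ * z₃) ^ 2 + (c₁ * z₁) ^ 2 + (c₂ * z₂) ^ 2 ≤ (1 + s * z₃) ^ 2 := by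
  obtain ⟨hγ, hβ, hP⟩ := sub_nonneg_and_add_nonneg_and_sq_le_of_sqrt_le h1
  obtain ⟨hδ, hα, hQ⟩ := sub_nonneg_and_add_nonneg_and_sq_le_of_sqrt_le h2
  have hz₃ : z₃ ^ 2 ≤ 1 ^ 2 := by nlinarith [sq_nonneg z₁, sq_nonneg z₂]
  obtain ⟨hz₃₁, hz₃₂⟩ := abs_le_of_sq_le_sq' hz₃ zero_le_one
  have hX : 0 ≤ (1 + z₃) / 2 := by linarith
  have hW : 0 ≤ (1 - z₃) / 2 := by linarith
  set X := (1 + z₃) / 2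
  set W := (1 - z₃) / 2
  have hXW : z₁ ^ 2 + z₂ ^ 2 = 4 * (X * W) := by linear_combination hz
  have hcs := sq_abs_add_abs_mul_le_mul (p := c₁ - c₂) (q := c₁ + c₂)
    (mul_nonneg hα hX) (mul_nonneg hβ hW) (mul_nonneg hγ hX) (mul_nonneg hδ hW) (mul_nonneg hX hW)
    (by nlinarith [mul_le_mul_of_nonneg_right hQ (mul_nonneg hX hW)])
    (by nlinarith [mul_le_mul_of_nonneg_right hP (mul_nonneg hX hW)])
  calc (r + c₃ * z₃) ^ 2 + (c₁ * z₁) ^ 2 + (c₂ * z₂) ^ 2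
      ≤ (r + c₃ * z₃) ^ 2 + max (c₁ ^ 2) (c₂ ^ 2) * (z₁ ^ 2 + z₂ ^ 2) := by
        nlinarith [mul_le_mul_of_nonneg_right (le_max_left (c₁ ^ 2) (c₂ ^ 2)) (sq_nonneg z₁),
          mul_le_mul_of_nonneg_right (le_max_right (c₁ ^ 2) (c₂ ^ 2)) (sq_nonneg z₂)]
    _ = (r + c₃ * z₃) ^ 2 + (|c₁ - c₂| + |c₁ + c₂|) ^ 2 * (X * W) := by
        rw [sq_abs_sub_add_abs_add, hXW]; ring
    _ ≤ (r + c₃ * z₃) ^ 2 + ((1 + c₃ + (r + s)) * X + (1 - c₃ + (r - s)) * W) *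
          ((1 - c₃ - (r - s)) * X + (1 + c₃ - (r + s)) * W) := by gcongr
    _ = (1 + s * z₃) ^ 2 := by ring

theorem post_measurement_eigenvalue_bounds (r s c₁ c₂ c₃ : ℝ)
    (h1 : Real.sqrt ((r-s)^2 + (c₁+c₂)^2) ≤ 1 - c₃)
    (h2 : Real.sqrt ((r+s)^2 + (c₁-c₂)^2) ≤ 1 + c₃) :
    (∀ z₁ z₂ z₃ : ℝ, z₁^2 + z₂^2 + z₃^2 = 1 →
      r^2 + 2*r*c₃*z₃ + (c₁*z₁)^2 + (c₂*z₂)^2 + (c₃*z₃)^2 ≤ (1 + s*z₃)^2 ∧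
      r^2 - 2*r*c₃*z₃ + (c₁*z₁)^2 + (c₂*z₂)^2 + (c₃*z₃)^2 ≤ (1 - s*z₃)^2) ∧
    r^2 + max (c₁^2) (c₂^2) ≤ 1 := by
  have bound : ∀ z₁ z₂ z₃ : ℝ, z₁ ^ 2 + z₂ ^ 2 + z₃ ^ 2 = 1 →
      (r + c₃ * z₃) ^ 2 + (c₁ * z₁) ^ 2 + (c₂ * z₂) ^ 2 ≤ (1 + s * z₃) ^ 2 :=
    fun _ _ _ hz => sq_add_sq_add_sq_le_of_sqrt_le h1 h2 hz
  refine ⟨fun z₁ z₂ z₃ hz => ⟨?_, ?_⟩, ?_⟩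
  · linarith [bound z₁ z₂ z₃ hz]
  · linarith [bound z₁ z₂ (-z₃) (by linear_combination hz)]
  · have hc₁ := bound 1 0 0 (by norm_num)
    have hc₂ := bound 0 1 0 (by norm_num)
    have : max (c₁ ^ 2) (c₂ ^ 2) ≤ 1 - r ^ 2 := max_le (by linarith) (by linarith)
    linarith
end

section
/- Fix real numbers r, s, c₃ and z with |s·z| < 1. Let 0 ≤ θ₁ < θ₂ be real numbers such that r²+2rc₃z+θ₁ ≥ 0, r²−2rc₃z+θ₁ ≥ 0, √(r²+2rc₃z+θ₂) < 1+sz, and √(r²−2rc₃z+θ₂) < 1−sz. Then G(θ₁, z) < G(θ₂, z); that is, θ ↦ G(θ, z) is strictly increasing on the admissible range of θ. -/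
/-!
With `a = 1 ± s z` and `h = h±`, each half of `G` equals `(a / 2) (1 - H₂((a + h) / (2 a)))`,
where `H₂` is the binary entropy in bits. As `θ` grows, `h` grows within `[0, a]`, so
`(a + h) / (2 a)` moves right inside `[1/2, 1]`, where `H₂` is strictly decreasing.
-/

/-- The two-variable function `G(θ, z)` from the quantum discord of X-states,
with parameters `r, s, c₃`.  Terms `x·log₂x` vanish automatically when `x = 0`
since the logarithm is multiplied by the zero factor. -/
noncomputable def G (r s c₃ θ z : ℝ) : ℝ :=
  let hp := Real.sqrt (r^2 + 2*r*c₃*z + θ)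
  let hm := Real.sqrt (r^2 - 2*r*c₃*z + θ)
  (1/4) * (1 + s*z + hp) * Real.logb 2 ((1 + s*z + hp) / (1 + s*z)) +
  (1/4) * (1 + s*z - hp) * Real.logb 2 ((1 + s*z - hp) / (1 + s*z)) +
  (1/4) * (1 - s*z + hm) * Real.logb 2 ((1 - s*z + hm) / (1 - s*z)) +
  (1/4) * (1 - s*z - hm) * Real.logb 2 ((1 - s*z - hm) / (1 - s*z))

open Real

lemma mul_logb_div_add_mul_logb_div_eq_binEntropy {a : ℝ} (ha : a ≠ 0) (h : ℝ) :
    (a + h) * logb 2 ((a + h) / a) + (a - h) * logb 2 ((a - h) / a)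
      = 2 * a * (1 - binEntropy ((a + h) / (2 * a)) / log 2) := by
  have hlog : ∀ p : ℝ, p * log (2 * p) = p * log 2 + p * log p := fun p => by
    rcases eq_or_ne p 0 with rfl | hp
    · simp
    · rw [log_mul two_ne_zero hp]; ring
  have hdiv : ∀ x : ℝ, 2 * a * x / a = 2 * x := fun x => by field_simp
  set p := (a + h) / (2 * a)
  have hadd : a + h = 2 * a * p := by simp only [p]; field_simp
  have hsub : a - h = 2 * a * (1 - p) := by simp only [p]; field_simp; ring
  clear_value p
  have hL : log 2 / log 2 = 1 := div_self (log_pos one_lt_two).ne'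
  rw [hadd, hsub, hdiv, hdiv]
  simp only [logb, binEntropy, log_inv]
  linear_combination (2 * a / log 2) * (hlog p + hlog (1 - p)) + 2 * a * hL

lemma strictMonoOn_mul_logb_div_add_mul_logb_div {a : ℝ} (ha : 0 < a) :
    StrictMonoOn (fun h => (a + h) * logb 2 ((a + h) / a) + (a - h) * logb 2 ((a - h) / a))
      (Set.Icc 0 a) := by
  have mem : ∀ h ∈ Set.Icc 0 a, (a + h) / (2 * a) ∈ Set.Icc 2⁻¹ 1 := fun h ⟨h0, hle⟩ =>
    ⟨by rw [le_div_iff₀ (by positivity)]; linarith, by rw [div_le_one (by positivity)]; linarith⟩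
  intro h₁ h₁mem h₂ h₂mem h12
  have hH : binEntropy ((a + h₂) / (2 * a)) < binEntropy ((a + h₁) / (2 * a)) :=
    binEntropy_strictAntiOn (mem h₁ h₁mem) (mem h₂ h₂mem) (by gcongr)
  have := log_pos one_lt_two
  simp only [mul_logb_div_add_mul_logb_div_eq_binEntropy ha.ne']
  gcongr

theorem G_strictMono_in_theta_general (r s c₃ z : ℝ)
    (θ₁ θ₂ : ℝ) (h12 : θ₁ < θ₂)
    (hp1 : r^2 + 2*r*c₃*z + θ₁ ≥ 0)
    (hm1 : r^2 - 2*r*c₃*z + θ₁ ≥ 0)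
    (hp2 : Real.sqrt (r^2 + 2*r*c₃*z + θ₂) < 1 + s*z)
    (hm2 : Real.sqrt (r^2 - 2*r*c₃*z + θ₂) < 1 - s*z) :
    G r s c₃ θ₁ z < G r s c₃ θ₂ z := by
  have key : ∀ {a x₁ x₂ : ℝ}, 0 ≤ x₁ → x₁ < x₂ → √x₂ < a →
      (a + √x₁) * logb 2 ((a + √x₁) / a) + (a - √x₁) * logb 2 ((a - √x₁) / a)
        < (a + √x₂) * logb 2 ((a + √x₂) / a) + (a - √x₂) * logb 2 ((a - √x₂) / a) :=
    fun hx₁ hx12 hx₂ =>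
      have hsqrt := sqrt_lt_sqrt hx₁ hx12
      strictMonoOn_mul_logb_div_add_mul_logb_div ((sqrt_nonneg _).trans_lt hx₂)
        ⟨sqrt_nonneg _, (hsqrt.trans hx₂).le⟩ ⟨(sqrt_nonneg _).trans hsqrt.le, hx₂.le⟩ hsqrt
  have hadd := key hp1 (by linarith) hp2
  have hsub := key hm1 (by linarith) hm2
  unfold G
  linarith

theorem G_strictMono_in_theta (r s c₃ z : ℝ) (hsz : |s*z| < 1)
    (θ₁ θ₂ : ℝ) (h0 : 0 ≤ θ₁) (h12 : θ₁ < θ₂)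
    (hp1 : r^2 + 2*r*c₃*z + θ₁ ≥ 0)
    (hm1 : r^2 - 2*r*c₃*z + θ₁ ≥ 0)
    (hp2 : Real.sqrt (r^2 + 2*r*c₃*z + θ₂) < 1 + s*z)
    (hm2 : Real.sqrt (r^2 - 2*r*c₃*z + θ₂) < 1 - s*z) :
    G r s c₃ θ₁ z < G r s c₃ θ₂ z :=
  G_strictMono_in_theta_general r s c₃ z θ₁ θ₂ h12 hp1 hm1 hp2 hm2
end

section
/- Let r, s, c₁, c₂, c₃ be real numbers with |s| < 1, set c = max(|c₁|, |c₂|), and assume that for all z₁, z₂, z₃ with z₁²+z₂²+z₃² = 1 one has √(r²+2rc₃z₃+(c₁z₁)²+(c₂z₂)²+(c₃z₃)²) ≤ 1+sz₃ and √(r²−2rc₃z₃+(c₁z₁)²+(c₂z₂)²+(c₃z₃)²) ≤ 1−sz₃. Then the supremum of G((c₁z₁)²+(c₂z₂)²+(c₃z₃)², z₃) over all (z₁, z₂, z₃) with z₁²+z₂²+z₃² = 1 equals the supremum over z ∈ [0, 1] of F(z) := G(c²+(c₃²−c²)z², z). -/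
/-!
With `a = 1 ± s z` and `u = h±`, each half of `G` is
`((a + u) log (a + u) + (a - u) log (a - u) - 2 a log a) / (4 log 2)`, which by convexity of
`x ↦ x log x` increases with `u ∈ [0, a]`. Hence `G(θ, z)` increases with `θ` as long as
`h± ≤ 1 ± s z`, and it is even in `z`. On the slice of the unit sphere at height `z₃` the quadratic
form `(c₁z₁)² + (c₂z₂)² + (c₃z₃)²` attains its maximum `c² + (c₃² - c²) z₃²`, so every value of `G`
on the sphere is dominated by `F(|z₃|)` and every value `F(z)` is itself a value on the sphere.
-/

open Real Set

noncomputable def mulLogSpread (a u : ℝ) : ℝ :=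
  (a + u) * log (a + u) + (a - u) * log (a - u) - 2 * (a * log a)

lemma mulLogSpread_monotoneOn (a : ℝ) : MonotoneOn (mulLogSpread a) (Icc 0 a) := by
  rintro u ⟨hu, -⟩ u' ⟨-, hu'a⟩ huu'
  rcases (hu.trans huu').eq_or_lt with hu' | hu'
  · obtain rfl : u = u' := by linarith
    rfl
  -- `a ± u` are the convex combinations of `a ± u'` with weights `t, 1 - t` and `1 - t, t`.
  set t := (u' + u) / (2 * u')
  have ht₀ : 0 ≤ t := by positivity
  have ht₁ : 0 ≤ 1 - t := by rw [sub_nonneg, div_le_one (by positivity)]; linarith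
  have hplus : a + u' ∈ Ici (0 : ℝ) := by rw [mem_Ici]; linarith
  have hminus : a - u' ∈ Ici (0 : ℝ) := by rw [mem_Ici]; linarith
  have jensen₁ := convexOn_mul_log.2 hplus hminus ht₀ ht₁ (by ring)
  have jensen₂ := convexOn_mul_log.2 hplus hminus ht₁ ht₀ (by ring)
  have e₁ : t • (a + u') + (1 - t) • (a - u') = a + u := by
    simp only [smul_eq_mul, t]; field_simp; ring
  have e₂ : (1 - t) • (a + u') + t • (a - u') = a - u := by
    simp only [smul_eq_mul, t]; field_simp; ring
  rw [e₁] at jensen₁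
  rw [e₂] at jensen₂
  simp only [smul_eq_mul] at jensen₁ jensen₂
  unfold mulLogSpread
  linarith

lemma mul_log_div (x : ℝ) {a : ℝ} (ha : a ≠ 0) : x * log (x / a) = x * log x - x * log a := by
  rcases eq_or_ne x 0 with rfl | hx
  · simp
  · rw [log_div hx ha, mul_sub]

lemma G_eq_mulLogSpread {r s c₃ θ z : ℝ} (hplus : 1 + s * z ≠ 0) (hminus : 1 - s * z ≠ 0) :
    G r s c₃ θ z =
      (mulLogSpread (1 + s * z) √(r^2 + 2*r*c₃*z + θ) +
        mulLogSpread (1 - s * z) √(r^2 - 2*r*c₃*z + θ)) / (4 * log 2) := by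
  simp only [G, logb, mulLogSpread, ← mul_div_assoc, mul_assoc (1 / 4 : ℝ),
    mul_log_div _ hplus, mul_log_div _ hminus]
  ring

lemma G_neg (r s c₃ θ z : ℝ) : G r s c₃ θ (-z) = G r s c₃ θ z := by
  simp only [G, mul_neg, sub_neg_eq_add, ← sub_eq_add_neg]
  ring

lemma G_abs (r s c₃ θ z : ℝ) : G r s c₃ θ |z| = G r s c₃ θ z := by
  rcases abs_choice z with h | h <;> rw [h]
  exact G_neg r s c₃ θ z

lemma G_le_G_of_le {r s c₃ z θ θ' : ℝ} (hplus : 0 < 1 + s * z) (hminus : 0 < 1 - s * z)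
    (hθ : θ ≤ θ') (hθ'plus : √(r^2 + 2*r*c₃*z + θ') ≤ 1 + s * z)
    (hθ'minus : √(r^2 - 2*r*c₃*z + θ') ≤ 1 - s * z) :
    G r s c₃ θ z ≤ G r s c₃ θ' z := by
  rw [G_eq_mulLogSpread hplus.ne' hminus.ne', G_eq_mulLogSpread hplus.ne' hminus.ne']
  have hplus_le := sqrt_le_sqrt (by linarith : r^2 + 2*r*c₃*z + θ ≤ r^2 + 2*r*c₃*z + θ')
  have hminus_le := sqrt_le_sqrt (by linarith : r^2 - 2*r*c₃*z + θ ≤ r^2 - 2*r*c₃*z + θ')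
  gcongr
  · exact mulLogSpread_monotoneOn _ ⟨sqrt_nonneg _, hplus_le.trans hθ'plus⟩
      ⟨sqrt_nonneg _, hθ'plus⟩ hplus_le
  · exact mulLogSpread_monotoneOn _ ⟨sqrt_nonneg _, hminus_le.trans hθ'minus⟩
      ⟨sqrt_nonneg _, hθ'minus⟩ hminus_le

lemma sq_mul_add_sq_mul_le (c₁ c₂ z₁ z₂ : ℝ) :
    (c₁ * z₁)^2 + (c₂ * z₂)^2 ≤ (max |c₁| |c₂|)^2 * (z₁^2 + z₂^2) := by
  have h₁ : c₁^2 ≤ (max |c₁| |c₂|)^2 := by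
    rw [← sq_abs c₁]; gcongr; exact le_max_left _ _
  have h₂ : c₂^2 ≤ (max |c₁| |c₂|)^2 := by
    rw [← sq_abs c₂]; gcongr; exact le_max_right _ _
  nlinarith [mul_le_mul_of_nonneg_right h₁ (sq_nonneg z₁),
    mul_le_mul_of_nonneg_right h₂ (sq_nonneg z₂)]

lemma exists_sq_mul_add_sq_mul_eq (c₁ c₂ : ℝ) {t : ℝ} (ht : 0 ≤ t) :
    ∃ w₁ w₂ : ℝ, w₁^2 + w₂^2 = t ∧ (c₁ * w₁)^2 + (c₂ * w₂)^2 = (max |c₁| |c₂|)^2 * t := by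
  rcases le_total |c₂| |c₁| with h | h
  · refine ⟨√t, 0, by simp [sq_sqrt ht], ?_⟩
    simp [max_eq_left h, mul_pow, sq_sqrt ht]
  · refine ⟨0, √t, by simp [sq_sqrt ht], ?_⟩
    simp [max_eq_right h, mul_pow, sq_sqrt ht]

lemma sq_mul_add_sq_mul_add_sq_mul_le_of_sphere (c₁ c₂ c₃ : ℝ) {z₁ z₂ z₃ : ℝ}
    (hz : z₁^2 + z₂^2 + z₃^2 = 1) :
    (c₁ * z₁)^2 + (c₂ * z₂)^2 + (c₃ * z₃)^2 ≤
      (max |c₁| |c₂|)^2 + (c₃^2 - (max |c₁| |c₂|)^2) * z₃^2 := by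
  nlinarith [sq_mul_add_sq_mul_le c₁ c₂ z₁ z₂]

lemma exists_sphere_sq_mul_add_sq_mul_add_sq_mul_eq (c₁ c₂ c₃ : ℝ) {z : ℝ} (hz : z^2 ≤ 1) :
    ∃ w₁ w₂ : ℝ, w₁^2 + w₂^2 + z^2 = 1 ∧ (c₁ * w₁)^2 + (c₂ * w₂)^2 + (c₃ * z)^2 =
      (max |c₁| |c₂|)^2 + (c₃^2 - (max |c₁| |c₂|)^2) * z^2 := by
  obtain ⟨w₁, w₂, hw, hθ⟩ := exists_sq_mul_add_sq_mul_eq c₁ c₂ (sub_nonneg.2 hz)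
  exact ⟨w₁, w₂, by linarith, by linarith⟩

theorem sup_G_sphere_eq_sup_F (r s c₁ c₂ c₃ c : ℝ) (hs : |s| < 1)
    (hc : c = max |c₁| |c₂|)
    (hpos : ∀ z₁ z₂ z₃ : ℝ, z₁^2 + z₂^2 + z₃^2 = 1 →
      Real.sqrt (r^2 + 2*r*c₃*z₃ + (c₁*z₁)^2 + (c₂*z₂)^2 + (c₃*z₃)^2) ≤ 1 + s*z₃ ∧
      Real.sqrt (r^2 - 2*r*c₃*z₃ + (c₁*z₁)^2 + (c₂*z₂)^2 + (c₃*z₃)^2) ≤ 1 - s*z₃) :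
    sSup {x : ℝ | ∃ z₁ z₂ z₃ : ℝ, z₁^2 + z₂^2 + z₃^2 = 1 ∧
        x = G r s c₃ ((c₁*z₁)^2 + (c₂*z₂)^2 + (c₃*z₃)^2) z₃} =
    sSup ((fun z => G r s c₃ (c^2 + (c₃^2 - c^2) * z^2) z) '' Set.Icc (0 : ℝ) 1) := by
  subst hc
  have hbound : ∀ z : ℝ, z^2 ≤ 1 →
      √(r^2 + 2*r*c₃*z + (max |c₁| |c₂|^2 + (c₃^2 - max |c₁| |c₂|^2) * z^2)) ≤ 1 + s*z ∧
      √(r^2 - 2*r*c₃*z + (max |c₁| |c₂|^2 + (c₃^2 - max |c₁| |c₂|^2) * z^2)) ≤ 1 - s*z := by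
    intro z hz
    obtain ⟨w₁, w₂, hw, hθ⟩ := exists_sphere_sq_mul_add_sq_mul_add_sq_mul_eq c₁ c₂ c₃ hz
    rw [← hθ]
    simpa only [add_assoc] using hpos w₁ w₂ z hw
  apply csSup_eq_csSup_of_forall_exists_le
  · rintro _ ⟨z₁, z₂, z₃, hz, rfl⟩
    have hz₃ : |z₃|^2 ≤ 1 := by rw [sq_abs]; nlinarith
    have hsz : |s| * |z₃| < 1 := by nlinarith [abs_nonneg s, abs_nonneg z₃]
    refine ⟨_, mem_image_of_mem _ ⟨abs_nonneg z₃, by nlinarith [abs_nonneg z₃]⟩, ?_⟩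
    rw [← G_abs r s c₃ _ z₃]
    refine G_le_G_of_le (by nlinarith [neg_abs_le s, abs_nonneg z₃])
      (by nlinarith [le_abs_self s, abs_nonneg z₃]) ?_ (hbound _ hz₃).1 (hbound _ hz₃).2
    simpa only [sq_abs] using sq_mul_add_sq_mul_add_sq_mul_le_of_sphere c₁ c₂ c₃ hz
  · rintro _ ⟨z, hz, rfl⟩
    obtain ⟨w₁, w₂, hw, hθ⟩ :=
      exists_sphere_sq_mul_add_sq_mul_add_sq_mul_eq c₁ c₂ c₃ (by nlinarith [hz.1, hz.2] : z^2 ≤ 1)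
    exact ⟨_, ⟨w₁, w₂, z, hw, rfl⟩, by rw [hθ]⟩
end

section
/- The function g(x) = (1/x)·log₂((1+x)/(1−x)) is strictly increasing on the open interval (0, 1). -/
/-! Since `log ((1 + x) / (1 - x)) = 2 ∑ x ^ (2k+1) / (2k+1)` for `|x| < 1`, the function
`g x` equals `(2 / log 2) ∑ x ^ (2k) / (2k+1)`, a power series with nonnegative coefficients in `x²`
whose `x²` coefficient is positive; such a series is strictly increasing on `(0, 1)`. -/

open Real Set

theorem hasSum_log_one_add_div_one_sub_div_self {x : ℝ} (hx₀ : x ≠ 0) (hx : |x| < 1) :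
    HasSum (fun k : ℕ => 2 / (2 * k + 1) * x ^ (2 * k)) (log ((1 + x) / (1 - x)) / x) := by
  have h₁ : 0 < 1 + x := by linarith [neg_abs_le x]
  have h₂ : 0 < 1 - x := by linarith [le_abs_self x]
  rw [log_div h₁.ne' h₂.ne']
  have hterm (k : ℕ) :
      2 * (1 / (2 * k + 1)) * x ^ (2 * k + 1) / x = 2 / (2 * k + 1) * x ^ (2 * k) := by
    rw [pow_succ]
    field_simp
  simpa only [hterm] using (hasSum_log_sub_log_of_abs_lt_one hx).div_const x

theorem strictMonoOn_log_one_add_div_one_sub_div_self :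
    StrictMonoOn (fun x : ℝ => log ((1 + x) / (1 - x)) / x) (Ioo 0 1) := by
  have hasSum {x : ℝ} (hx : x ∈ Ioo (0 : ℝ) 1) := hasSum_log_one_add_div_one_sub_div_self hx.1.ne'
    (by rw [abs_of_pos hx.1]; exact hx.2)
  intro x hx y hy hxy
  have hx₀ : 0 ≤ x := hx.1.le
  exact hasSum_lt (i := 1) (fun k => by gcongr) (by gcongr) (hasSum hx) (hasSum hy)

theorem g_strictMonoOn :
    StrictMonoOn (fun x : ℝ => (1/x) * Real.logb 2 ((1+x)/(1-x))) (Set.Ioo (0:ℝ) 1) := by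
  intro x hx y hy hxy
  simp only [← log_div_log, one_div_mul_eq_div, div_right_comm _ (log 2)]
  exact div_lt_div_of_pos_right (strictMonoOn_log_one_add_div_one_sub_div_self hx hy hxy)
    (log_pos one_lt_two)
end
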